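/- arXiv:1606.04912 — 3 statements merged into one kernel-verified Lean document; each statement's English description precedes it below -/
import Mathlib

section
/- Let a < b be real numbers and 0 < sigma < 1. If w : [a,b] → ℝ is absolutely continuous with derivative w' in L^1(a,b) and w(a) = 0, then differentiation commutes with the left fractional integral: for almost every x in (a,b), the function y ↦ (I_{a+}^sigma w)(y) is differentiable at x with derivative equal to (I_{a+}^sigma w')(x); in particular (I_{a+}^sigma w)(x) = (1/Gamma(sigma+1)) ∫_a^x (x-s)^{sigma} w'(s) ds for every x in [a,b]. -/
open MeasureTheory Real Set

/-- Left Riemann–Liouville fractional integral of order `σ` with base point `a`. -/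
noncomputable def Il (a σ : ℝ) (w : ℝ → ℝ) (x : ℝ) : ℝ :=
  (1 / Real.Gamma σ) * ∫ s in a..x, (x - s) ^ (σ - 1) * w s

/-!
Since `w = ∫_a^· w'`, both `I^σ w` and `x ↦ ∫_a^x I^σ w'` are double integrals of `w'` over the
triangle `a < t ≤ s ≤ x`. After Fubini the inner integral of either kernel, `(x - s)^(σ-1)` resp.
`(s - t)^(σ-1)`, is `(x - t)^σ / σ`, and `Γ(σ + 1) = σ Γ(σ)` identifies both with `I^(σ+1) w'`.
The same bound `(x - a)^σ / σ` on the kernels makes `I^σ w'` integrable, so `I^σ w` is the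
indefinite integral of an `L¹` function and Lebesgue's differentiation theorem gives its
derivative almost everywhere.
-/

lemma Ici_inter_Ioc_of_lt {α : Type*} [Preorder α] {a t x : α} (ht : a < t) :
    Ici t ∩ Ioc a x = Icc t x := by
  ext s
  simp only [mem_inter_iff, mem_Ici, mem_Ioc, mem_Icc]
  exact ⟨fun h => ⟨h.1, h.2.2⟩, fun h => ⟨h.1, ht.trans_le h.1, h.2⟩⟩

section Triangle

variable {a x C : ℝ} {K : ℝ → ℝ → ℝ} {g : ℝ → ℝ}

noncomputable def triangleIntegrand (K : ℝ → ℝ → ℝ) (g : ℝ → ℝ) : ℝ × ℝ → ℝ :=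
  {p : ℝ × ℝ | p.2 ≤ p.1}.indicator fun p => K p.1 p.2 * g p.2

lemma triangleIntegrand_apply_left (s : ℝ) :
    (fun t => triangleIntegrand K g (s, t)) = (Iic s).indicator fun t => K s t * g t := by
  ext t
  simp [triangleIntegrand, indicator_apply]

lemma triangleIntegrand_apply_right (t : ℝ) :
    (fun s => triangleIntegrand K g (s, t)) = (Ici t).indicator fun s => K s t * g t := by
  ext s
  simp [triangleIntegrand, indicator_apply]

lemma integral_triangleIntegrand_left {s : ℝ} (hs : s ≤ x) :
    ∫ t in Ioc a x, triangleIntegrand K g (s, t) = ∫ t in Ioc a s, K s t * g t := by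
  rw [triangleIntegrand_apply_left, integral_indicator measurableSet_Iic,
    Measure.restrict_restrict measurableSet_Iic, Iic_inter_Ioc_of_le hs]

lemma integral_triangleIntegrand_right {t : ℝ} (ht : a < t) :
    ∫ s in Ioc a x, triangleIntegrand K g (s, t) = (∫ s in Ioc t x, K s t) * g t := by
  rw [triangleIntegrand_apply_right, integral_indicator measurableSet_Ici,
    Measure.restrict_restrict measurableSet_Ici, Ici_inter_Ioc_of_lt ht,
    integral_Icc_eq_integral_Ioc, integral_mul_const]

lemma integrable_triangleIntegrand (hK : Measurable fun p : ℝ × ℝ => K p.1 p.2)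
    (hg : IntegrableOn g (Ioc a x)) (hKint : ∀ t ∈ Ioc a x, IntegrableOn (K · t) (Ioc t x))
    (hKbound : ∀ t ∈ Ioc a x, ∫ s in Ioc t x, |K s t| ≤ C) :
    Integrable (triangleIntegrand K g)
      ((volume.restrict (Ioc a x)).prod (volume.restrict (Ioc a x))) := by
  have hmeas : AEStronglyMeasurable (triangleIntegrand K g)
      ((volume.restrict (Ioc a x)).prod (volume.restrict (Ioc a x))) :=
    (hK.aestronglyMeasurable.mul hg.aestronglyMeasurable.comp_snd).indicator
      (measurableSet_le measurable_snd measurable_fst)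
  rw [integrable_prod_iff' hmeas]
  constructor
  · filter_upwards [ae_restrict_mem measurableSet_Ioc] with t ht
    rw [triangleIntegrand_apply_right, integrable_indicator_iff measurableSet_Ici, IntegrableOn,
      Measure.restrict_restrict measurableSet_Ici, Ici_inter_Ioc_of_lt ht.1]
    exact ((integrableOn_Icc_iff_integrableOn_Ioc).2 (hKint t ht)).mul_const (g t)
  · refine Integrable.mono' (hg.norm.mul_const C) hmeas.norm.prod_swap.integral_prod_right' ?_
    filter_upwards [ae_restrict_mem measurableSet_Ioc] with t ht
    have hslice : (fun s => ‖triangleIntegrand K g (s, t)‖)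
        = (Ici t).indicator fun s => |K s t| * ‖g t‖ := by
      ext s
      by_cases hts : t ≤ s <;> simp [triangleIntegrand, hts]
    rw [Real.norm_of_nonneg (integral_nonneg fun _ => norm_nonneg _), hslice,
      integral_indicator measurableSet_Ici, Measure.restrict_restrict measurableSet_Ici,
      Ici_inter_Ioc_of_lt ht.1, integral_Icc_eq_integral_Ioc, integral_mul_const, mul_comm]
    exact mul_le_mul_of_nonneg_left (hKbound t ht) (norm_nonneg _)

lemma integral_integral_triangle_swap
    (hF : Integrable (triangleIntegrand K g)
      ((volume.restrict (Ioc a x)).prod (volume.restrict (Ioc a x)))) :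
    ∫ s in Ioc a x, ∫ t in Ioc a s, K s t * g t
      = ∫ t in Ioc a x, (∫ s in Ioc t x, K s t) * g t := calc
  _ = ∫ s in Ioc a x, ∫ t in Ioc a x, triangleIntegrand K g (s, t) :=
    setIntegral_congr_fun measurableSet_Ioc fun _ hs => (integral_triangleIntegrand_left hs.2).symm
  _ = ∫ t in Ioc a x, ∫ s in Ioc a x, triangleIntegrand K g (s, t) :=
    integral_integral_swap hF
  _ = ∫ t in Ioc a x, (∫ s in Ioc t x, K s t) * g t :=
    setIntegral_congr_fun measurableSet_Ioc fun _ ht => integral_triangleIntegrand_right ht.1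

lemma integrable_triangleIntegrand_of_integral_eq {σ : ℝ} (hσ : 0 < σ)
    (hK : Measurable fun p : ℝ × ℝ => K p.1 p.2) (hg : IntegrableOn g (Ioc a x))
    (hKint : ∀ t ∈ Ioc a x, IntegrableOn (K · t) (Ioc t x))
    (hK0 : ∀ t ∈ Ioc a x, ∀ s ∈ Ioc t x, 0 ≤ K s t)
    (hKeq : ∀ t ∈ Ioc a x, ∫ s in Ioc t x, K s t = (x - t) ^ σ / σ) :
    Integrable (triangleIntegrand K g)
      ((volume.restrict (Ioc a x)).prod (volume.restrict (Ioc a x))) := by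
  refine integrable_triangleIntegrand (C := (x - a) ^ σ / σ) hK hg hKint fun t ht => ?_
  rw [setIntegral_congr_fun measurableSet_Ioc fun s hs => abs_of_nonneg (hK0 t ht s hs), hKeq t ht]
  gcongr
  · linarith [ht.2]
  · linarith [ht.1]

end Triangle

section Kernel

variable {σ t x : ℝ}

lemma integral_Ioc_rpow_sub_left (hσ : 0 < σ) (htx : t ≤ x) :
    ∫ s in Ioc t x, (x - s) ^ (σ - 1) = (x - t) ^ σ / σ := by
  rw [← intervalIntegral.integral_of_le htx, intervalIntegral.integral_comp_sub_left
    (fun u => u ^ (σ - 1)), sub_self, integral_rpow (Or.inl (by linarith)), sub_add_cancel,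
    zero_rpow hσ.ne', sub_zero]

lemma integral_Ioc_rpow_sub_right (hσ : 0 < σ) (htx : t ≤ x) :
    ∫ s in Ioc t x, (s - t) ^ (σ - 1) = (x - t) ^ σ / σ := by
  rw [← intervalIntegral.integral_of_le htx, intervalIntegral.integral_comp_sub_right
    (fun u => u ^ (σ - 1)), sub_self, integral_rpow (Or.inl (by linarith)), sub_add_cancel,
    zero_rpow hσ.ne', sub_zero]

lemma integrableOn_Ioc_rpow_sub_left (hσ : 0 < σ) :
    IntegrableOn (fun s => (x - s) ^ (σ - 1)) (Ioc t x) := by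
  simpa using ((intervalIntegral.intervalIntegrable_rpow' (by linarith : -1 < σ - 1)
    (a := x - t) (b := 0)).comp_sub_left x).1

lemma integrableOn_Ioc_rpow_sub_right (hσ : 0 < σ) :
    IntegrableOn (fun s => (s - t) ^ (σ - 1)) (Ioc t x) := by
  simpa using ((intervalIntegral.intervalIntegrable_rpow' (by linarith : -1 < σ - 1)
    (a := 0) (b := x - t)).comp_sub_right t).1

end Kernel

section FractionalIntegral

variable {a σ x : ℝ} {g : ℝ → ℝ}

lemma Il_add_one_eq (hσ : 0 < σ) (hax : a ≤ x) :
    Il a (σ + 1) g x = 1 / Gamma σ * ∫ t in Ioc a x, (x - t) ^ σ / σ * g t := by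
  rw [Il, add_sub_cancel_right, intervalIntegral.integral_of_le hax, Gamma_add_one hσ.ne',
    ← integral_const_mul, ← integral_const_mul]
  congr 1 with t
  field_simp

lemma Il_eq_Il_add_one_of_eq_integral {w : ℝ → ℝ} (hσ : 0 < σ) (hax : a ≤ x)
    (hg : IntegrableOn g (Ioc a x)) (hw : ∀ s ∈ Ioc a x, w s = ∫ t in a..s, g t) :
    Il a σ w x = Il a (σ + 1) g x := calc
  _ = 1 / Gamma σ * ∫ s in Ioc a x, ∫ t in Ioc a s, (x - s) ^ (σ - 1) * g t := by
    rw [Il, intervalIntegral.integral_of_le hax]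
    congr 1
    refine setIntegral_congr_fun measurableSet_Ioc fun s hs => ?_
    rw [hw s hs, intervalIntegral.integral_of_le hs.1.le, integral_const_mul]
  _ = 1 / Gamma σ * ∫ t in Ioc a x, (∫ s in Ioc t x, (x - s) ^ (σ - 1)) * g t := by
    rw [integral_integral_triangle_swap (K := fun s _ => (x - s) ^ (σ - 1))
      (integrable_triangleIntegrand_of_integral_eq hσ (by fun_prop) hg
        (fun _ _ => integrableOn_Ioc_rpow_sub_left hσ)
        (fun _ _ s hs => rpow_nonneg (sub_nonneg.2 hs.2) _)
        (fun t ht => integral_Ioc_rpow_sub_left hσ ht.2))]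
  _ = Il a (σ + 1) g x := by
    rw [Il_add_one_eq hσ hax]
    congr 1
    exact setIntegral_congr_fun measurableSet_Ioc fun t ht => by
      rw [integral_Ioc_rpow_sub_left hσ ht.2]

lemma integrable_triangleIntegrand_rpow_sub (hσ : 0 < σ) (hg : IntegrableOn g (Ioc a x)) :
    Integrable (triangleIntegrand (fun s t => (s - t) ^ (σ - 1)) g)
      ((volume.restrict (Ioc a x)).prod (volume.restrict (Ioc a x))) :=
  integrable_triangleIntegrand_of_integral_eq hσ (by fun_prop) hg
    (fun _ _ => integrableOn_Ioc_rpow_sub_right hσ)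
    (fun _ _ s hs => rpow_nonneg (sub_nonneg.2 hs.1.le) _)
    (fun t ht => integral_Ioc_rpow_sub_right hσ ht.2)

lemma Il_eq_integral_triangleIntegrand {s : ℝ} (hs : s ∈ Ioc a x) :
    Il a σ g s = 1 / Gamma σ *
      ∫ t in Ioc a x, triangleIntegrand (fun s t => (s - t) ^ (σ - 1)) g (s, t) := by
  rw [Il, integral_triangleIntegrand_left hs.2, intervalIntegral.integral_of_le hs.1.le]

lemma intervalIntegrable_Il (hσ : 0 < σ) (hax : a ≤ x) (hg : IntegrableOn g (Ioc a x)) :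
    IntervalIntegrable (Il a σ g) volume a x := by
  rw [intervalIntegrable_iff_integrableOn_Ioc_of_le hax]
  exact IntegrableOn.congr_fun
    (((integrable_triangleIntegrand_rpow_sub hσ hg).integral_prod_left).const_mul _)
    (fun s hs => (Il_eq_integral_triangleIntegrand hs).symm) measurableSet_Ioc

lemma integral_Il_eq_Il_add_one (hσ : 0 < σ) (hax : a ≤ x) (hg : IntegrableOn g (Ioc a x)) :
    ∫ s in a..x, Il a σ g s = Il a (σ + 1) g x := calc
  _ = 1 / Gamma σ * ∫ s in Ioc a x, ∫ t in Ioc a s, (s - t) ^ (σ - 1) * g t := by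
    rw [intervalIntegral.integral_of_le hax, ← integral_const_mul]
    refine setIntegral_congr_fun measurableSet_Ioc fun s hs => ?_
    rw [Il, intervalIntegral.integral_of_le hs.1.le]
  _ = 1 / Gamma σ * ∫ t in Ioc a x, (∫ s in Ioc t x, (s - t) ^ (σ - 1)) * g t := by
    rw [integral_integral_triangle_swap (integrable_triangleIntegrand_rpow_sub hσ hg)]
  _ = Il a (σ + 1) g x := by
    rw [Il_add_one_eq hσ hax]
    congr 1
    exact setIntegral_congr_fun measurableSet_Ioc fun t ht => by
      rw [integral_Ioc_rpow_sub_right hσ ht.2]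

end FractionalIntegral

theorem deriv_comm_left_fractional_integral_general (a b σ : ℝ) (hab : a < b)
    (hσ0 : 0 < σ) (w w' : ℝ → ℝ)
    (hw' : IntegrableOn w' (Ioo a b))
    (hAC : ∀ x ∈ Icc a b, w x = w a + ∫ s in a..x, w' s)
    (hwa : w a = 0) :
    (∀ᵐ x ∂(volume.restrict (Ioo a b)),
        HasDerivAt (fun y => Il a σ w y) (Il a σ w' x) x) ∧
    ∀ x ∈ Icc a b,
      Il a σ w x = (1 / Real.Gamma (σ + 1)) * ∫ s in a..x, (x - s) ^ σ * w' s := by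
  have hw'Ioc : IntegrableOn w' (Ioc a b) := (integrableOn_Ioc_iff_integrableOn_Ioo).2 hw'
  have hw'Ioc_of_le : ∀ x ≤ b, IntegrableOn w' (Ioc a x) := fun x hx =>
    hw'Ioc.mono_set (Ioc_subset_Ioc_right hx)
  have hIw : ∀ x ∈ Icc a b, Il a σ w x = Il a (σ + 1) w' x := fun x hx =>
    Il_eq_Il_add_one_of_eq_integral hσ0 hx.1 (hw'Ioc_of_le x hx.2) fun s hs => by
      rw [hAC s ⟨hs.1.le, hs.2.trans hx.2⟩, hwa, zero_add]
  refine ⟨?_, fun x hx => by rw [hIw x hx, Il, add_sub_cancel_right]⟩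
  have hderiv := (intervalIntegrable_Il hσ0 hab.le hw'Ioc).ae_hasDerivAt_integral
  filter_upwards [ae_restrict_of_ae hderiv, ae_restrict_mem measurableSet_Ioo] with x hder hx
  refine (hder (Icc_subset_uIcc (Ioo_subset_Icc_self hx)) a left_mem_uIcc).congr_of_eventuallyEq ?_
  filter_upwards [Ioo_mem_nhds hx.1 hx.2] with y hy
  rw [hIw y (Ioo_subset_Icc_self hy),
    integral_Il_eq_Il_add_one hσ0 hy.1.le (hw'Ioc_of_le y hy.2.le)]

/-- If `w` is absolutely continuous on `[a,b]` with derivative `w' ∈ L¹(a,b)` and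
`w(a) = 0`, then differentiation commutes with the left fractional integral:
`D (I_{a+}^σ w) = I_{a+}^σ w'` a.e. on `(a,b)`; in particular
`(I_{a+}^σ w)(x) = (1/Γ(σ+1)) ∫_a^x (x-s)^σ w'(s) ds` on `[a,b]`. -/
theorem deriv_comm_left_fractional_integral (a b σ : ℝ) (hab : a < b)
    (hσ0 : 0 < σ) (hσ1 : σ < 1) (w w' : ℝ → ℝ)
    (hw' : IntegrableOn w' (Ioo a b))
    (hAC : ∀ x ∈ Icc a b, w x = w a + ∫ s in a..x, w' s)
    (hwa : w a = 0) :
    (∀ᵐ x ∂(volume.restrict (Ioo a b)),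
        HasDerivAt (fun y => Il a σ w y) (Il a σ w' x) x) ∧
    ∀ x ∈ Icc a b,
      Il a σ w x = (1 / Real.Gamma (σ + 1)) * ∫ s in a..x, (x - s) ^ σ * w' s :=
  deriv_comm_left_fractional_integral_general a b σ hab hσ0 w w' hw' hAC hwa
end

section
/- Let 0 < beta < 1, 0 ≤ theta ≤ 1, and let g : (0,1) → ℝ be defined by g(x) = 4 for x in (0,1/4), g(x) = −4 for x in (1/4,3/4), g(x) = 4 for x in (3/4,1). Then theta·(I_{0+}^beta g)(1/4) + (1−theta)·(I_{1-}^beta g)(1/4) = (4^{1−beta}/Gamma(beta+1)) · ((2·theta − 1) + (1−theta)(1 + 3^beta − 2^{1+beta})), and theta·(I_{0+}^beta g)(3/4) + (1−theta)·(I_{1-}^beta g)(3/4) = (4^{1−beta}/Gamma(beta+1)) · ((1 − 2·theta) + theta·(1 + 3^beta − 2^{1+beta})). -/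
open MeasureTheory Real Set

/-- Right Riemann–Liouville fractional integral of order `σ` with base point `b`. -/
noncomputable def Ir (b σ : ℝ) (w : ℝ → ℝ) (x : ℝ) : ℝ :=
  (1 / Real.Gamma σ) * ∫ s in x..b, (s - x) ^ (σ - 1) * w s

/-- The a.e. derivative of the piecewise-linear test function: `g = 4` on
`(0,1/4)`, `g = -4` on `(1/4,3/4)`, `g = 4` on `(3/4,1)`. -/
noncomputable def gpl (x : ℝ) : ℝ :=
  if x < 1 / 4 then 4 else if x < 3 / 4 then -4 else 4

/-! On each of `(0,1/4)`, `(1/4,3/4)`, `(3/4,1)` the function `gpl` is constant, so after splitting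
the range of integration each fractional integral is a combination of the elementary integrals
`∫ (x - s) ^ (β - 1) ds = ± (·) ^ β / β`. Evaluated at the breakpoints these produce the powers
`(k / 4) ^ β = 4 ^ (1 - β) / 4 * k ^ β` for `k = 1, 2, 3`, and `β Γ(β) = Γ(β + 1)` collects the
constants. -/

section PowerKernel

variable {f : ℝ → ℝ} {a b c x r : ℝ}

theorem integral_sub_rpow_mul_of_eqOn (hr : -1 < r) (h : EqOn f (fun _ => c) (uIoo a b)) :
    ∫ s in a..b, (x - s) ^ r * f s = c * (((x - a) ^ (r + 1) - (x - b) ^ (r + 1)) / (r + 1)) := by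
  rw [intervalIntegral.integral_congr_uIoo (g := fun s => c * (x - s) ^ r)
      fun s hs => by simp [h hs, mul_comm],
    intervalIntegral.integral_const_mul, intervalIntegral.integral_comp_sub_left (fun u => u ^ r),
    integral_rpow (Or.inl hr)]

theorem integral_rpow_sub_mul_of_eqOn (hr : -1 < r) (h : EqOn f (fun _ => c) (uIoo a b)) :
    ∫ s in a..b, (s - x) ^ r * f s = c * (((b - x) ^ (r + 1) - (a - x) ^ (r + 1)) / (r + 1)) := by
  rw [intervalIntegral.integral_congr_uIoo (g := fun s => c * (s - x) ^ r)
      fun s hs => by simp [h hs, mul_comm],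
    intervalIntegral.integral_const_mul, intervalIntegral.integral_comp_sub_right (fun u => u ^ r),
    integral_rpow (Or.inl hr)]

theorem intervalIntegrable_sub_rpow_mul_of_eqOn (hr : -1 < r) (h : EqOn f (fun _ => c) (uIoo a b)) :
    IntervalIntegrable (fun s => (x - s) ^ r * f s) volume a b := by
  have hpow :=
    (intervalIntegral.intervalIntegrable_rpow' (a := x - a) (b := x - b) hr).comp_sub_left x
  rw [sub_sub_cancel, sub_sub_cancel] at hpow
  exact (hpow.mul_const c).congr_uIoo fun s hs => by simp [h hs]

theorem intervalIntegrable_rpow_sub_mul_of_eqOn (hr : -1 < r) (h : EqOn f (fun _ => c) (uIoo a b)) :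
    IntervalIntegrable (fun s => (s - x) ^ r * f s) volume a b := by
  have hpow :=
    (intervalIntegral.intervalIntegrable_rpow' (a := a - x) (b := b - x) hr).comp_sub_right x
  rw [sub_add_cancel, sub_add_cancel] at hpow
  exact (hpow.mul_const c).congr_uIoo fun s hs => by simp [h hs]

end PowerKernel

theorem gpl_eqOn_first : EqOn gpl (fun _ => 4) (uIoo 0 (1 / 4)) := by
  intro s hs
  rw [uIoo_of_le (by norm_num)] at hs
  rw [gpl, if_pos hs.2]

theorem gpl_eqOn_middle : EqOn gpl (fun _ => -4) (uIoo (1 / 4) (3 / 4)) := by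
  intro s hs
  rw [uIoo_of_le (by norm_num)] at hs
  rw [gpl, if_neg hs.1.not_gt, if_pos hs.2]

theorem gpl_eqOn_last : EqOn gpl (fun _ => 4) (uIoo (3 / 4) 1) := by
  intro s hs
  rw [uIoo_of_le (by norm_num)] at hs
  rw [gpl, if_neg (by linarith [hs.1]), if_neg hs.1.not_gt]

theorem div_four_rpow {y : ℝ} (hy : 0 ≤ y) (β : ℝ) :
    (y / 4) ^ β = 4 ^ (1 - β) / 4 * y ^ β := by
  rw [div_rpow hy (by norm_num), rpow_sub (by norm_num), rpow_one]
  field_simp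

section GplValues

variable {β : ℝ}

theorem Il_gpl_one_quarter (hβ : 0 < β) :
    Il 0 β gpl (1 / 4) = 4 ^ (1 - β) / Gamma (β + 1) := by
  have hr : -1 < β - 1 := by linarith
  rw [Il, integral_sub_rpow_mul_of_eqOn hr gpl_eqOn_first, sub_add_cancel, sub_zero, sub_self,
    zero_rpow hβ.ne', div_four_rpow zero_le_one, one_rpow, Gamma_add_one hβ.ne']
  field_simp
  ring

theorem Ir_gpl_one_quarter (hβ : 0 < β) :
    Ir 1 β gpl (1 / 4) = 4 ^ (1 - β) / Gamma (β + 1) * (3 ^ β - 2 ^ (1 + β)) := by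
  have hr : -1 < β - 1 := by linarith
  rw [Ir, ← intervalIntegral.integral_add_adjacent_intervals
      (intervalIntegrable_rpow_sub_mul_of_eqOn hr gpl_eqOn_middle)
      (intervalIntegrable_rpow_sub_mul_of_eqOn hr gpl_eqOn_last),
    integral_rpow_sub_mul_of_eqOn hr gpl_eqOn_middle,
    integral_rpow_sub_mul_of_eqOn hr gpl_eqOn_last,
    sub_add_cancel, sub_self, zero_rpow hβ.ne', show (3 / 4 - 1 / 4 : ℝ) = 2 / 4 by norm_num,
    show (1 - 1 / 4 : ℝ) = 3 / 4 by norm_num, div_four_rpow zero_le_two,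
    div_four_rpow zero_le_three, rpow_one_add' zero_le_two (by positivity), Gamma_add_one hβ.ne']
  field_simp
  ring

theorem Il_gpl_three_quarters (hβ : 0 < β) :
    Il 0 β gpl (3 / 4) = 4 ^ (1 - β) / Gamma (β + 1) * (3 ^ β - 2 ^ (1 + β)) := by
  have hr : -1 < β - 1 := by linarith
  rw [Il, ← intervalIntegral.integral_add_adjacent_intervals
      (intervalIntegrable_sub_rpow_mul_of_eqOn hr gpl_eqOn_first)
      (intervalIntegrable_sub_rpow_mul_of_eqOn hr gpl_eqOn_middle),
    integral_sub_rpow_mul_of_eqOn hr gpl_eqOn_first,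
    integral_sub_rpow_mul_of_eqOn hr gpl_eqOn_middle,
    sub_add_cancel, sub_self, zero_rpow hβ.ne', sub_zero,
    show (3 / 4 - 1 / 4 : ℝ) = 2 / 4 by norm_num,
    div_four_rpow zero_le_two, div_four_rpow zero_le_three,
    rpow_one_add' zero_le_two (by positivity), Gamma_add_one hβ.ne']
  field_simp
  ring

theorem Ir_gpl_three_quarters (hβ : 0 < β) :
    Ir 1 β gpl (3 / 4) = 4 ^ (1 - β) / Gamma (β + 1) := by
  have hr : -1 < β - 1 := by linarith
  rw [Ir, integral_rpow_sub_mul_of_eqOn hr gpl_eqOn_last, sub_add_cancel, sub_self,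
    zero_rpow hβ.ne', show (1 - 3 / 4 : ℝ) = 1 / 4 by norm_num,
    div_four_rpow zero_le_one, one_rpow,
    Gamma_add_one hβ.ne']
  field_simp
  ring

end GplValues

theorem two_sided_fractional_integral_values_general (β θ : ℝ) (hβ0 : 0 < β) :
    θ * Il 0 β gpl (1 / 4) + (1 - θ) * Ir 1 β gpl (1 / 4)
      = (4:ℝ) ^ (1 - β) / Real.Gamma (β + 1)
          * ((2 * θ - 1) + (1 - θ) * (1 + (3:ℝ) ^ β - (2:ℝ) ^ (1 + β))) ∧
    θ * Il 0 β gpl (3 / 4) + (1 - θ) * Ir 1 β gpl (3 / 4)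
      = (4:ℝ) ^ (1 - β) / Real.Gamma (β + 1)
          * ((1 - 2 * θ) + θ * (1 + (3:ℝ) ^ β - (2:ℝ) ^ (1 + β))) := by
  rw [Il_gpl_one_quarter hβ0, Ir_gpl_one_quarter hβ0, Il_gpl_three_quarters hβ0,
    Ir_gpl_three_quarters hβ0]
  constructor <;> ring

/-- Values at `x = 1/4` and `x = 3/4` of the weighted two-sided fractional
integral of `gpl` of order `0 < β < 1` with weight `θ ∈ [0,1]`. -/
theorem two_sided_fractional_integral_values (β θ : ℝ) (hβ0 : 0 < β) (hβ1 : β < 1)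
    (hθ : θ ∈ Icc (0:ℝ) 1) :
    θ * Il 0 β gpl (1 / 4) + (1 - θ) * Ir 1 β gpl (1 / 4)
      = (4:ℝ) ^ (1 - β) / Real.Gamma (β + 1)
          * ((2 * θ - 1) + (1 - θ) * (1 + (3:ℝ) ^ β - (2:ℝ) ^ (1 + β))) ∧
    θ * Il 0 β gpl (3 / 4) + (1 - θ) * Ir 1 β gpl (3 / 4)
      = (4:ℝ) ^ (1 - β) / Real.Gamma (β + 1)
          * ((1 - 2 * θ) + θ * (1 + (3:ℝ) ^ β - (2:ℝ) ^ (1 + β))) :=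
  two_sided_fractional_integral_values_general β θ hβ0
end

section
/- (Loss of coercivity of the Galerkin bilinear form for variable coefficients) For every beta with 0 < beta < 1 and every theta in [0,1], there exists a measurable function K : (0,1) → ℝ and constants 0 < K_m ≤ K_M such that K_m ≤ K(x) ≤ K_M for all x in (0,1) (K may be taken piecewise constant with three pieces), and such that the Galerkin bilinear form B evaluated at the explicit piecewise-linear function w is strictly negative: B(w,w) = ∫_0^1 K(x) · (theta·(I_{0+}^beta g)(x) + (1−theta)·(I_{1-}^beta g)(x)) · g(x) dx < 0, where g is the almost-everywhere derivative of w. -/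
/-!
Writing `g = 4 - 8 H(· - 1/4) + 8 H(· - 3/4)` with the Heaviside function `H`, whose left
Riemann–Liouville integral is `(x - c)₊^β / Γ(β + 1)`, gives `I_{0+}^β g` in closed form
`Φ = rlIntegralGpl`; the reflection `s ↦ 1 - s` maps `g` to itself a.e., so
`I_{1-}^β g (x) = Φ (1 - x)`. Hence `F = θ I_{0+}^β g + (1 - θ) I_{1-}^β g` is continuous and,
whatever `θ`, `F (1/4) + F (3/4) = Φ (1/4) + Φ (3/4) ∝ (1/4)^β + (3/4)^β - 2 (1/2)^β < 0`
by strict concavity of `t ↦ t^β`. So `F < 0` near `1/4` or near `3/4`, on the side where `g = 4`,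
i.e. `F g < 0` on a small interval, and a coefficient `K` that is large on that interval makes
`B(w, w) = ∫ K F g` negative.
-/

open MeasureTheory Real Set

theorem exists_measurable_weight_setIntegral_mul_neg {α : Type*} [MeasurableSpace α]
    {μ : Measure α} {s S : Set α} {h : α → ℝ} (hh : IntegrableOn h s μ)
    (hS : MeasurableSet S) (hSs : S ⊆ s) (hneg : ∫ x in S, h x ∂μ < 0) :
    ∃ K : α → ℝ, ∃ M : ℝ, Measurable K ∧ (∀ x, 1 ≤ K x ∧ K x ≤ M) ∧
      ∫ x in s, K x * h x ∂μ < 0 := by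
  set I := ∫ x in s, h x ∂μ
  set J := ∫ x in S, h x ∂μ
  -- The weight `1 + M` on `S` adds `M * J` to `I`, which is negative once `M` is large.
  set M := (|I| + 1) / -J
  have hM : 0 ≤ M := div_nonneg (by positivity) (by linarith)
  have hMJ : M * J = -(|I| + 1) := by
    rw [div_mul_eq_mul_div, div_neg, mul_div_assoc, div_self hneg.ne, mul_one]
  refine ⟨fun x => 1 + M * S.indicator 1 x, 1 + M,
    measurable_const.add (measurable_const.mul (measurable_one.indicator hS)), fun x => ?_, ?_⟩
  · have h0 : 0 ≤ S.indicator (1 : α → ℝ) x := indicator_nonneg (fun _ _ => zero_le_one) x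
    have h1 : S.indicator (1 : α → ℝ) x ≤ 1 :=
      indicator_apply_le' (fun _ => le_rfl) (fun _ => zero_le_one)
    constructor <;> nlinarith
  · have hsplit : ∀ x, (1 + M * S.indicator 1 x) * h x = h x + M * S.indicator h x := by
      intro x
      by_cases hx : x ∈ S
      · rw [indicator_of_mem hx, indicator_of_mem hx, Pi.one_apply]; ring
      · rw [indicator_of_notMem hx, indicator_of_notMem hx]; ring
    simp only [hsplit]
    rw [integral_add hh ((hh.mono_set hSs).integrable_indicator hS |>.integrableOn.const_mul M),
      MeasureTheory.integral_const_mul, setIntegral_indicator hS,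
      inter_eq_self_of_subset_right hSs, hMJ]
    linarith [le_abs_self I]

section RiemannLiouville

open intervalIntegral

variable {σ : ℝ}

theorem integral_sub_rpow (hσ : 0 < σ) (x a b : ℝ) :
    ∫ s in a..b, (x - s) ^ (σ - 1) = ((x - a) ^ σ - (x - b) ^ σ) / σ := by
  rw [integral_comp_sub_left (fun u => u ^ (σ - 1)) x, integral_rpow (Or.inl (by linarith)),
    sub_add_cancel]

theorem intervalIntegrable_sub_rpow (hσ : 0 < σ) (x a b : ℝ) :
    IntervalIntegrable (fun s => (x - s) ^ (σ - 1)) volume a b := by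
  simpa using ((intervalIntegrable_rpow' (a := x - b) (b := x - a)
    (by linarith : -1 < σ - 1)).comp_sub_left x).symm

theorem integral_indicator_Ici_eq_zero {f : ℝ → ℝ} {a b c : ℝ} (hac : a ≤ c) (hbc : b ≤ c) :
    ∫ s in a..b, (Ici c).indicator f s = 0 := by
  rw [← integral_zero (a := a) (b := b) (μ := volume)]
  refine integral_congr_ae ?_
  filter_upwards [(countable_singleton c).ae_notMem volume] with s hsc hs
  exact indicator_of_notMem (fun h => hsc (le_antisymm (hs.2.trans (max_le hac hbc)) h)) f

theorem integral_indicator_Ici_sub_rpow (hσ : 0 < σ) {a c : ℝ} (hac : a ≤ c) (x : ℝ) :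
    ∫ s in a..x, (Ici c).indicator (fun s => (x - s) ^ (σ - 1)) s = max (x - c) 0 ^ σ / σ := by
  have hk := intervalIntegrable_sub_rpow hσ x
  have hint : ∀ a b,
      IntervalIntegrable ((Ici c).indicator fun s => (x - s) ^ (σ - 1)) volume a b :=
    fun a b => ⟨(hk a b).1.indicator measurableSet_Ici, (hk a b).2.indicator measurableSet_Ici⟩
  rcases le_total x c with hxc | hcx
  · rw [integral_indicator_Ici_eq_zero hac hxc, max_eq_right (by linarith),
      zero_rpow hσ.ne', zero_div]
  · rw [← integral_add_adjacent_intervals (hint a c) (hint c x),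
      integral_indicator_Ici_eq_zero hac le_rfl, zero_add,
      integral_congr fun s hs => indicator_of_mem (uIcc_of_le hcx ▸ hs).1 _,
      integral_sub_rpow hσ, sub_self, zero_rpow hσ.ne', sub_zero, max_eq_left (by linarith)]

theorem Il_congr_ae {a : ℝ} {v w : ℝ → ℝ} (h : v =ᵐ[volume] w) (x : ℝ) :
    Il a σ v x = Il a σ w x := by
  unfold Il
  congr 1
  refine integral_congr_ae ?_
  filter_upwards [h] with s hs _ using by rw [hs]

theorem Ir_eq_Il_comp_sub (b : ℝ) (w : ℝ → ℝ) (x : ℝ) :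
    Ir b σ w x = Il 0 σ (fun t => w (b - t)) (b - x) := by
  unfold Il Ir
  congr 1
  simp_rw [sub_right_comm b x]
  rw [integral_comp_sub_left (fun u => (u - x) ^ (σ - 1) * w u) b, sub_sub_cancel, sub_zero]

end RiemannLiouville

theorem mul_gpl_eq (f : ℝ → ℝ) (s : ℝ) :
    f s * gpl s = 4 * f s - 8 * (Ici (1/4)).indicator f s + 8 * (Ici (3/4)).indicator f s := by
  simp only [gpl, indicator_apply, mem_Ici]
  split_ifs <;> first | (exfalso; linarith) | ring

noncomputable def rlIntegralGpl (β x : ℝ) : ℝ :=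
  4 * (x ^ β - 2 * max (x - 1/4) 0 ^ β + 2 * max (x - 3/4) 0 ^ β) / Gamma (β + 1)

open intervalIntegral in
theorem Il_gpl {β : ℝ} (hβ : 0 < β) (x : ℝ) : Il 0 β gpl x = rlIntegralGpl β x := by
  have hk := intervalIntegrable_sub_rpow hβ x 0 x
  have hH : ∀ c, IntervalIntegrable ((Ici c).indicator fun s => (x - s) ^ (β - 1)) volume 0 x :=
    fun c => ⟨hk.1.indicator measurableSet_Ici, hk.2.indicator measurableSet_Ici⟩
  simp only [Il, rlIntegralGpl, mul_gpl_eq (fun s => (x - s) ^ (β - 1))]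
  rw [integral_add ((hk.const_mul 4).sub ((hH _).const_mul 8)) ((hH _).const_mul 8),
    integral_sub (hk.const_mul 4) ((hH _).const_mul 8)]
  simp only [intervalIntegral.integral_const_mul]
  rw [integral_sub_rpow hβ, integral_indicator_Ici_sub_rpow hβ (by norm_num),
    integral_indicator_Ici_sub_rpow hβ (by norm_num), Gamma_add_one hβ.ne', sub_zero, sub_self,
    zero_rpow hβ.ne']
  have := (Gamma_pos_of_pos hβ).ne'
  field_simp
  ring

theorem gpl_one_sub_ae_eq : (fun t => gpl (1 - t)) =ᵐ[volume] gpl := by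
  filter_upwards [((countable_singleton (1/4 : ℝ)).insert (3/4)).ae_notMem volume] with t ht
  simp only [mem_insert_iff, mem_singleton_iff, not_or] at ht
  obtain ⟨h3, h1⟩ := ht
  have h1 := lt_or_gt_of_ne h1
  have h3 := lt_or_gt_of_ne h3
  simp only [gpl]
  split_ifs <;> first
    | rfl
    | (exfalso; rcases h1 with h1 | h1 <;> rcases h3 with h3 | h3 <;> linarith)

theorem Ir_gpl {β : ℝ} (hβ : 0 < β) (x : ℝ) : Ir 1 β gpl x = rlIntegralGpl β (1 - x) := by
  rw [Ir_eq_Il_comp_sub, Il_congr_ae gpl_one_sub_ae_eq, Il_gpl hβ]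

theorem continuous_rlIntegralGpl {β : ℝ} (hβ : 0 < β) : Continuous (rlIntegralGpl β) := by
  have h := continuous_rpow_const hβ.le
  unfold rlIntegralGpl
  fun_prop

theorem rpow_quarter_add_rpow_threeQuarter_lt {β : ℝ} (hβ0 : 0 < β) (hβ1 : β < 1) :
    (1/4 : ℝ) ^ β + (3/4 : ℝ) ^ β < 2 * (1/2 : ℝ) ^ β := by
  have h := (strictConcaveOn_rpow hβ0 hβ1).2 (mem_Ici.2 (by norm_num : (0:ℝ) ≤ 1/4))
    (mem_Ici.2 (by norm_num : (0:ℝ) ≤ 3/4)) (by norm_num)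
    (by norm_num : (0:ℝ) < 1/2) (by norm_num : (0:ℝ) < 1/2) (by norm_num)
  norm_num at h
  linarith

theorem rlIntegralGpl_quarter_add_threeQuarter_neg {β : ℝ} (hβ0 : 0 < β) (hβ1 : β < 1) :
    rlIntegralGpl β (1/4) + rlIntegralGpl β (3/4) < 0 := by
  have hsum : rlIntegralGpl β (1/4) + rlIntegralGpl β (3/4)
      = 4 * ((1/4 : ℝ) ^ β + (3/4 : ℝ) ^ β - 2 * (1/2 : ℝ) ^ β) / Gamma (β + 1) := by
    simp only [rlIntegralGpl]
    norm_num [zero_rpow hβ0.ne']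
    ring
  rw [hsum]
  have := rpow_quarter_add_rpow_threeQuarter_lt hβ0 hβ1
  have := Gamma_pos_of_pos (by linarith : 0 < β + 1)
  exact div_neg_of_neg_of_pos (by linarith) this

theorem measurable_gpl : Measurable gpl := by
  unfold gpl
  exact measurable_const.ite measurableSet_Iio
    (measurable_const.ite measurableSet_Iio measurable_const)

theorem intervalIntegrable_mul_gpl {F : ℝ → ℝ} (hF : Continuous F) (a b : ℝ) :
    IntervalIntegrable (fun x => F x * gpl x) volume a b := by
  refine intervalIntegrable_iff.2 ((hF.intervalIntegrable a b).def'.mul_bdd (c := 4)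
    measurable_gpl.aestronglyMeasurable (ae_of_all _ fun x => ?_))
  rw [norm_eq_abs]
  unfold gpl
  split_ifs <;> norm_num

theorem exists_Ioo_setIntegral_mul_gpl_neg {F : ℝ → ℝ} (hF : Continuous F)
    (hneg : F (1/4) + F (3/4) < 0) :
    ∃ a b, Ioo a b ⊆ Ioc 0 1 ∧ ∫ x in Ioo a b, F x * gpl x < 0 := by
  set U := Ioo (0 : ℝ) (1/4) ∪ Ioo (3/4) 1
  have hgpl : ∀ x ∈ U, gpl x = 4 := by
    rintro x (hx | hx) <;> simp only [gpl, mem_Ioo] at hx ⊢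
    · rw [if_pos hx.2]
    · rw [if_neg (by linarith [hx.1]), if_neg (by linarith [hx.1])]
  -- `F < 0` at `1/4` or at `3/4`, both in the closure of `U`; so `{F < 0} ∩ U` is nonempty.
  have hclosure : ∃ x₀ ∈ closure U, F x₀ < 0 := by
    rw [closure_union, closure_Ioo (by norm_num), closure_Ioo (by norm_num)]
    by_contra! h
    linarith [h (1/4) (Or.inl ⟨by norm_num, le_rfl⟩), h (3/4) (Or.inr ⟨le_rfl, by norm_num⟩)]
  obtain ⟨x₀, hx₀U, hx₀⟩ := hclosure
  have hopen : IsOpen ({x | F x < 0} ∩ U) :=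
    (isOpen_lt hF continuous_const).inter (isOpen_Ioo.union isOpen_Ioo)
  obtain ⟨a, b, hab, hsub⟩ := hopen.exists_Ioo_subset
    (mem_closure_iff.1 hx₀U _ (isOpen_lt hF continuous_const) hx₀)
  refine ⟨a, b, fun x hx => ?_, ?_⟩
  · rcases (hsub hx).2 with h | h
    · exact Ioo_subset_Ioc_self (Ioo_subset_Ioo_right (by norm_num) h)
    · exact Ioo_subset_Ioc_self (Ioo_subset_Ioo_left (by norm_num) h)
  · rw [← integral_Ioc_eq_integral_Ioo, ← intervalIntegral.integral_of_le hab.le, ← neg_pos,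
      ← intervalIntegral.integral_neg]
    refine intervalIntegral.intervalIntegral_pos_of_pos_on (intervalIntegrable_mul_gpl hF a b).neg
      (fun x hx => ?_) hab
    rw [hgpl x (hsub hx).2]
    linarith [(hsub hx).1.out]

theorem galerkin_form_not_coercive_general (β θ : ℝ) (hβ0 : 0 < β) (hβ1 : β < 1) :
    ∃ K : ℝ → ℝ, ∃ Km KM : ℝ, Measurable K ∧ 0 < Km ∧ Km ≤ KM ∧
      (∀ x ∈ Ioo (0:ℝ) 1, Km ≤ K x ∧ K x ≤ KM) ∧
      (∫ x in (0:ℝ)..1,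
        K x * (θ * Il 0 β gpl x + (1 - θ) * Ir 1 β gpl x) * gpl x) < 0 := by
  set F : ℝ → ℝ := fun x => θ * rlIntegralGpl β x + (1 - θ) * rlIntegralGpl β (1 - x)
  have hFc : Continuous F := by
    have := continuous_rlIntegralGpl hβ0
    fun_prop
  have hFsum : F (1/4) + F (3/4) < 0 := by
    have := rlIntegralGpl_quarter_add_threeQuarter_neg hβ0 hβ1
    have h14 : (1 : ℝ) - 1/4 = 3/4 := by norm_num
    have h34 : (1 : ℝ) - 3/4 = 1/4 := by norm_num
    simp only [F, h14, h34]
    linear_combination this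
  obtain ⟨a, b, hsub, hJ⟩ := exists_Ioo_setIntegral_mul_gpl_neg hFc hFsum
  obtain ⟨K, M, hK, hKb, hneg⟩ := exists_measurable_weight_setIntegral_mul_neg
    (intervalIntegrable_mul_gpl hFc 0 1).1 measurableSet_Ioo hsub hJ
  refine ⟨K, 1, M, hK, one_pos, (hKb 0).1.trans (hKb 0).2, fun x _ => hKb x, ?_⟩
  rw [intervalIntegral.integral_of_le zero_le_one]
  simpa only [Il_gpl hβ0, Ir_gpl hβ0, mul_assoc] using hneg

/-- Loss of coercivity of the Galerkin bilinear form for variable coefficients: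
for every `0 < β < 1` and `θ ∈ [0,1]` there is a measurable diffusivity `K`
bounded between positive constants such that `B(w,w) < 0` for the explicit
piecewise-linear function `w` with a.e. derivative `gpl`. -/
theorem galerkin_form_not_coercive (β θ : ℝ) (hβ0 : 0 < β) (hβ1 : β < 1)
    (hθ : θ ∈ Icc (0:ℝ) 1) :
    ∃ K : ℝ → ℝ, ∃ Km KM : ℝ, Measurable K ∧ 0 < Km ∧ Km ≤ KM ∧
      (∀ x ∈ Ioo (0:ℝ) 1, Km ≤ K x ∧ K x ≤ KM) ∧
      (∫ x in (0:ℝ)..1,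
        K x * (θ * Il 0 β gpl x + (1 - θ) * Ir 1 β gpl x) * gpl x) < 0 :=
  galerkin_form_not_coercive_general β θ hβ0 hβ1
end
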